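/- Let Y ⊂ ℝ be measurable with finite measure whose complement contains a closed interval ρ·[−1,1] + τ (ρ > 0, τ ∈ ℝ), and let I'(ρ,τ) = ρ·((−1,1) \ [−1/2,1/2]) + τ. Then there exists a point q ∈ ρ·(−1/2,1/2) + τ such that P(Y ∪ I'(ρ,τ), q) = 0, where P(X,z) = (i/π)∫_X dt/(z−t) extended continuously to real points outside the closure of X. -/

import Mathlib

/-!
Put `a = τ - ρ < c = τ - ρ/2 < d = τ + ρ/2 < b = τ + ρ`, so that the set is
`X = Y ∪ (a, c) ∪ (d, b)` and the gap is `(c, d)`. For real `q` in the gap, `P(X, q)` is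
`i/π` times the real integral `∫_X dt/(q - t)`, which is continuous in `q` because `q` stays away
from `X`. The two intervals contribute `log|q - a| - log|q - c| + log|q - d| - log|q - b|`,
which tends to `+∞` as `q → c⁺` and to `-∞` as `q → d⁻`, while the contribution of `Y` is
continuous at `c` and `d` because `Y` avoids `(a, b)`. The intermediate value theorem then
gives a zero in the gap.
-/

open Set MeasureTheory Complex

/-- The Poisson-type integral `P(X,z) = (i/π) ∫_X dt/(z-t)`; at a real point outside the
closure of `X` the integral converges and agrees with the continuous extension. -/
noncomputable def P (X : Set ℝ) (z : ℂ) : ℂ :=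
  (Complex.I / (Real.pi : ℂ)) * ∫ t in X, (z - (t : ℂ))⁻¹

open Filter Topology

lemma Ioo_diff_Icc_eq_union {α : Type*} [LinearOrder α] {a b c d : α} (had : a ≤ d)
    (hcb : c ≤ b) : Ioo a b \ Icc c d = Ioo a c ∪ Ioo d b := by
  ext x
  simp only [Set.mem_sdiff, mem_Ioo, mem_Icc, mem_union, not_and_or, not_le]
  constructor
  · rintro ⟨⟨hax, hxb⟩, hxc | hdx⟩
    · exact Or.inl ⟨hax, hxc⟩
    · exact Or.inr ⟨hdx, hxb⟩
  · rintro (⟨hax, hxc⟩ | ⟨hdx, hxb⟩)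
    · exact ⟨⟨hax, hxc.trans_le hcb⟩, Or.inl hxc⟩
    · exact ⟨⟨had.trans_lt hdx, hxb⟩, Or.inr hdx⟩

lemma exists_eq_of_tendsto_nhdsGT_atTop_of_tendsto_nhdsLT_atBot {α δ : Type*}
    [ConditionallyCompleteLinearOrder α] [DenselyOrdered α] [TopologicalSpace α]
    [OrderTopology α] [LinearOrder δ] [TopologicalSpace δ] [OrderClosedTopology δ]
    {f : α → δ} {c d : α}
    (hcd : c < d) (hf : ContinuousOn f (Ioo c d)) (hc : Tendsto f (𝓝[>] c) atTop)
    (hd : Tendsto f (𝓝[<] d) atBot) (y : δ) : ∃ q ∈ Ioo c d, f q = y := by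
  have := nhdsGT_neBot_of_exists_gt ⟨d, hcd⟩
  have := nhdsLT_neBot_of_exists_lt ⟨c, hcd⟩
  obtain ⟨q, hq, h⟩ := isPreconnected_Ioo.intermediate_value₂_eventually₂
    (le_principal_iff.2 (Ioo_mem_nhdsGT hcd)) (le_principal_iff.2 (Ioo_mem_nhdsLT hcd))
    continuousOn_const hf (hc.eventually_ge_atTop y) (hd.eventually_le_atBot y)
  exact ⟨q, hq, h.symm⟩

lemma notMem_closure_of_disjoint {α : Type*} [TopologicalSpace α] {X U : Set α} {q : α}
    (hU : IsOpen U) (hq : q ∈ U) (hd : Disjoint U X) : q ∉ closure X :=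
  disjoint_left.1 (hd.closure_right hU) hq

lemma exists_pos_le_abs_sub_of_notMem_closure {X : Set ℝ} {q : ℝ} (hq : q ∉ closure X) :
    ∃ δ > 0, ∀ x ∈ Metric.ball q δ, ∀ t ∈ X, δ ≤ |x - t| := by
  obtain ⟨ε, hε, hX⟩ : ∃ ε > 0, ∀ t ∈ X, ε ≤ |q - t| := by
    simpa [Metric.mem_closure_iff, Real.dist_eq] using hq
  refine ⟨ε / 2, half_pos hε, fun x hx t ht => ?_⟩
  rw [Metric.mem_ball, Real.dist_eq, abs_sub_comm] at hx
  calc ε / 2 ≤ |q - t| - |q - x| := by linarith [hX t ht]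
    _ ≤ |x - t| := by simpa using abs_sub_abs_le_abs_sub (q - t) (q - x)

lemma norm_inv_sub_le_of_le_abs {x t δ : ℝ} (hδ : 0 < δ) (h : δ ≤ |x - t|) :
    ‖(x - t)⁻¹‖ ≤ δ⁻¹ := by
  rw [norm_inv, Real.norm_eq_abs]
  exact inv_anti₀ hδ h

lemma tendsto_log_sub_nhdsNE (t : ℝ) :
    Tendsto (fun q => Real.log (q - t)) (𝓝[≠] t) atBot := by
  refine Real.tendsto_log_nhdsNE_zero.comp
    (tendsto_nhdsWithin_of_tendsto_nhds_of_eventually_within _ ?_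
      (eventually_nhdsWithin_of_forall fun q hq => sub_ne_zero.2 hq))
  simpa using ((continuous_sub_right t).tendsto t).mono_left nhdsWithin_le_nhds

noncomputable def realCauchyTransform (X : Set ℝ) (q : ℝ) : ℝ :=
  ∫ t in X, (q - t)⁻¹

lemma P_ofReal (X : Set ℝ) (q : ℝ) :
    P X q = Complex.I / (Real.pi : ℂ) * (realCauchyTransform X q : ℂ) := by
  rw [P, realCauchyTransform]
  congr 1
  simp only [← ofReal_sub, ← ofReal_inv]
  exact integral_ofReal

section

variable {X : Set ℝ} {q : ℝ}

lemma integrableOn_inv_sub (hX : MeasurableSet X) (hfin : volume X ≠ ⊤) (hq : q ∉ closure X) :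
    IntegrableOn (fun t => (q - t)⁻¹) X := by
  obtain ⟨δ, hδ, hdist⟩ := exists_pos_le_abs_sub_of_notMem_closure hq
  refine Measure.integrableOn_of_bounded (M := δ⁻¹) hfin
    (measurable_const.sub measurable_id).inv.aestronglyMeasurable ?_
  exact (ae_restrict_iff' hX).2 (ae_of_all _ fun t ht =>
    norm_inv_sub_le_of_le_abs hδ (hdist q (Metric.mem_ball_self hδ) t ht))

lemma continuousAt_realCauchyTransform (hX : MeasurableSet X) (hfin : volume X ≠ ⊤)
    (hq : q ∉ closure X) : ContinuousAt (realCauchyTransform X) q := by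
  obtain ⟨δ, hδ, hdist⟩ := exists_pos_le_abs_sub_of_notMem_closure hq
  refine continuousAt_of_dominated (bound := fun _ => δ⁻¹)
    (Eventually.of_forall fun x => (measurable_const.sub measurable_id).inv.aestronglyMeasurable)
    ?_ (integrableOn_const hfin) ?_
  · filter_upwards [Metric.ball_mem_nhds q hδ] with x hx
    exact (ae_restrict_iff' hX).2 (ae_of_all _ fun t ht =>
      norm_inv_sub_le_of_le_abs hδ (hdist x hx t ht))
  · refine (ae_restrict_iff' hX).2 (ae_of_all _ fun t ht => ?_)
    have hqt : q - t ≠ 0 := abs_pos.1 (hδ.trans_le (hdist q (Metric.mem_ball_self hδ) t ht))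
    exact (continuousAt_id.sub continuousAt_const).inv₀ hqt

end

lemma realCauchyTransform_Ioo {s t q : ℝ} (hst : s ≤ t) (hq : q ∉ Icc s t) :
    realCauchyTransform (Ioo s t) q = Real.log (q - s) - Real.log (q - t) := by
  have hqs : q - s ≠ 0 := sub_ne_zero.2 fun h => hq ⟨h.ge, h.le.trans hst⟩
  have hqt : q - t ≠ 0 := sub_ne_zero.2 fun h => hq ⟨hst.trans h.ge, h.le⟩
  have h0 : (0 : ℝ) ∉ uIcc (q - t) (q - s) := by
    rw [uIcc_of_le (by linarith)]
    rintro ⟨hlo, hhi⟩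
    exact hq ⟨by linarith, by linarith⟩
  rw [realCauchyTransform, ← integral_Ioc_eq_integral_Ioo,
    ← intervalIntegral.integral_of_le hst,
    intervalIntegral.integral_comp_sub_left (fun x : ℝ => x⁻¹) q, integral_inv h0,
    Real.log_div hqs hqt]

lemma realCauchyTransform_union_Ioo {Z : Set ℝ} (hZ : MeasurableSet Z) (hfin : volume Z ≠ ⊤)
    {s t q : ℝ} (hst : s ≤ t) (hd : Disjoint Z (Ioo s t)) (hqZ : q ∉ closure Z)
    (hq : q ∉ Icc s t) :
    realCauchyTransform (Z ∪ Ioo s t) q =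
      realCauchyTransform Z q + (Real.log (q - s) - Real.log (q - t)) := by
  have hqIoo : q ∉ closure (Ioo s t) := fun h =>
    hq (closure_minimal Ioo_subset_Icc_self isClosed_Icc h)
  rw [realCauchyTransform, setIntegral_union hd measurableSet_Ioo
    (integrableOn_inv_sub hZ hfin hqZ) (integrableOn_inv_sub measurableSet_Ioo
      measure_Ioo_lt_top.ne hqIoo), ← realCauchyTransform, ← realCauchyTransform,
    realCauchyTransform_Ioo hst hq]

lemma tendsto_realCauchyTransform_union_Ioo_nhdsGT {Z : Set ℝ} (hZ : MeasurableSet Z)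
    (hfin : volume Z ≠ ⊤) {s t : ℝ} (hst : s < t) (hd : Disjoint Z (Ioo s t))
    (ht : t ∉ closure Z) :
    Tendsto (realCauchyTransform (Z ∪ Ioo s t)) (𝓝[>] t) atTop := by
  have hformula : ∀ᶠ q in 𝓝[>] t, realCauchyTransform Z q + Real.log (q - s) +
      -Real.log (q - t) = realCauchyTransform (Z ∪ Ioo s t) q := by
    filter_upwards [nhdsWithin_le_nhds (isClosed_closure.isOpen_compl.mem_nhds ht),
      self_mem_nhdsWithin] with q hqZ hqt
    rw [realCauchyTransform_union_Ioo hZ hfin hst.le hd hqZ fun h => (not_le.2 hqt) h.2]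
    ring
  have hbounded : ContinuousAt (fun q => realCauchyTransform Z q + Real.log (q - s)) t :=
    (continuousAt_realCauchyTransform hZ hfin ht).add
      ((continuous_sub_right s).continuousAt.log (sub_ne_zero.2 hst.ne'))
  refine ((hbounded.tendsto.mono_left nhdsWithin_le_nhds).add_atTop ?_).congr' hformula
  exact tendsto_neg_atBot_atTop.comp
    ((tendsto_log_sub_nhdsNE t).mono_left (nhdsWithin_mono _ fun q hq => hq.ne'))

lemma tendsto_realCauchyTransform_union_Ioo_nhdsLT {Z : Set ℝ} (hZ : MeasurableSet Z)
    (hfin : volume Z ≠ ⊤) {s t : ℝ} (hst : s < t) (hd : Disjoint Z (Ioo s t))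
    (hs : s ∉ closure Z) :
    Tendsto (realCauchyTransform (Z ∪ Ioo s t)) (𝓝[<] s) atBot := by
  have hformula : ∀ᶠ q in 𝓝[<] s, realCauchyTransform Z q - Real.log (q - t) +
      Real.log (q - s) = realCauchyTransform (Z ∪ Ioo s t) q := by
    filter_upwards [nhdsWithin_le_nhds (isClosed_closure.isOpen_compl.mem_nhds hs),
      self_mem_nhdsWithin] with q hqZ hqs
    rw [realCauchyTransform_union_Ioo hZ hfin hst.le hd hqZ fun h => (not_le.2 hqs) h.1]
    ring
  have hbounded : ContinuousAt (fun q => realCauchyTransform Z q - Real.log (q - t)) s :=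
    (continuousAt_realCauchyTransform hZ hfin hs).sub
      ((continuous_sub_right t).continuousAt.log (sub_ne_zero.2 hst.ne))
  refine ((hbounded.tendsto.mono_left nhdsWithin_le_nhds).add_atBot ?_).congr' hformula
  exact (tendsto_log_sub_nhdsNE s).mono_left (nhdsWithin_mono _ fun q hq => hq.ne)

theorem exists_realCauchyTransform_eq_zero_of_gap {Z : Set ℝ} (hZ : MeasurableSet Z)
    (hfin : volume Z ≠ ⊤) {a c d b : ℝ} (hac : a < c) (hcd : c < d) (hdb : d < b)
    (hZab : Disjoint Z (Ioo a b)) :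
    ∃ q ∈ Ioo c d, realCauchyTransform (Z ∪ Ioo a c ∪ Ioo d b) q = 0 := by
  have hZIoo {u v : ℝ} (hu : a ≤ u) (hv : v ≤ b) : Disjoint Z (Ioo u v) :=
    hZab.mono_right (Ioo_subset_Ioo hu hv)
  have hIoo {u v w x : ℝ} (h : v ≤ w) : Disjoint (Ioo u v) (Ioo w x) :=
    Ioo_disjoint_Ioo.2 (min_le_left _ _ |>.trans (h.trans (le_max_right _ _)))
  have hmeas {u v : ℝ} {W : Set ℝ} (hW : MeasurableSet W) : MeasurableSet (W ∪ Ioo u v) :=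
    hW.union measurableSet_Ioo
  have hfin' {u v : ℝ} {W : Set ℝ} (hW : volume W ≠ ⊤) : volume (W ∪ Ioo u v) ≠ ⊤ :=
    measure_union_ne_top hW measure_Ioo_lt_top.ne
  have hcont : ContinuousOn (realCauchyTransform (Z ∪ Ioo a c ∪ Ioo d b)) (Ioo c d) :=
    fun q hq => (continuousAt_realCauchyTransform (hmeas (hmeas hZ)) (hfin' (hfin' hfin))
      (notMem_closure_of_disjoint isOpen_Ioo hq (disjoint_union_right.2
        ⟨disjoint_union_right.2 ⟨(hZIoo hac.le hdb.le).symm, (hIoo le_rfl).symm⟩,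
          hIoo le_rfl⟩))).continuousWithinAt
  have hc : Tendsto (realCauchyTransform (Z ∪ Ioo a c ∪ Ioo d b)) (𝓝[>] c) atTop := by
    rw [union_right_comm]
    exact tendsto_realCauchyTransform_union_Ioo_nhdsGT (hmeas hZ) (hfin' hfin) hac
      (disjoint_union_left.2 ⟨hZIoo le_rfl (hcd.trans hdb).le, (hIoo hcd.le).symm⟩)
      (notMem_closure_of_disjoint isOpen_Ioo ⟨hac, hcd⟩
        (disjoint_union_right.2 ⟨(hZIoo le_rfl hdb.le).symm, hIoo le_rfl⟩))
  have hd : Tendsto (realCauchyTransform (Z ∪ Ioo a c ∪ Ioo d b)) (𝓝[<] d) atBot :=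
    tendsto_realCauchyTransform_union_Ioo_nhdsLT (hmeas hZ) (hfin' hfin) hdb
      (disjoint_union_left.2 ⟨hZIoo (hac.trans hcd).le le_rfl, hIoo hcd.le⟩)
      (notMem_closure_of_disjoint isOpen_Ioo ⟨hcd, hdb⟩
        (disjoint_union_right.2 ⟨(hZIoo hac.le le_rfl).symm, (hIoo le_rfl).symm⟩))
  exact exists_eq_of_tendsto_nhdsGT_atTop_of_tendsto_nhdsLT_atBot hcd hcont hc hd 0

/-- If `Y ⊂ ℝ` is measurable of finite measure and its complement contains the closed
interval `ρ[-1,1] + τ`, and `I'(ρ,τ) = ρ((-1,1) \ [-1/2,1/2]) + τ`, then there is a point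
`q ∈ ρ(-1/2,1/2) + τ` at which `P(Y ∪ I'(ρ,τ), q) = 0`. -/
theorem P_zero_in_gap (Y : Set ℝ) (hY : MeasurableSet Y) (hYfin : volume Y < ⊤)
    (ρ τ : ℝ) (hρ : 0 < ρ) (hdisj : Set.Icc (τ - ρ) (τ + ρ) ⊆ Yᶜ) :
    ∃ q ∈ Set.Ioo (τ - ρ / 2) (τ + ρ / 2),
      P (Y ∪ (fun x : ℝ => ρ * x + τ) '' (Set.Ioo (-1 : ℝ) 1 \ Set.Icc (-(1/2)) (1/2)))
        (q : ℂ) = 0 := by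
  have himg : (fun x : ℝ => ρ * x + τ) '' (Ioo (-1 : ℝ) 1 \ Icc (-(1/2)) (1/2)) =
      Ioo (τ - ρ) (τ - ρ / 2) ∪ Ioo (τ + ρ / 2) (τ + ρ) := by
    rw [Ioo_diff_Icc_eq_union (by norm_num) (by norm_num), image_union, image_affine_Ioo hρ,
      image_affine_Ioo hρ]
    congr 1 <;> congr 1 <;> ring
  have hYgap : Disjoint Y (Ioo (τ - ρ) (τ + ρ)) :=
    (subset_compl_iff_disjoint_right.1 hdisj).symm.mono_right Ioo_subset_Icc_self
  obtain ⟨q, hq, hq0⟩ := exists_realCauchyTransform_eq_zero_of_gap hY hYfin.ne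
    (c := τ - ρ / 2) (d := τ + ρ / 2) (by linarith) (by linarith) (by linarith) hYgap
  exact ⟨q, hq, by rw [himg, ← union_assoc, P_ofReal, hq0, ofReal_zero, mul_zero]⟩
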